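/- Let ω = (−1 + i√3)/2 and let Q be an n×n nontrivial cube root Seidel matrix in standard form satisfying Q² = (n−1)·I + μ·Q for a real number μ. Then μ is an integer and μ ≡ 1 (mod 3), i.e., there exists m ∈ ℤ with μ = m and m ≡ 1 (mod 3). -/
import Mathlib


/-- `ω = (−1 + i√3)/2`, a primitive cube root of unity. -/
noncomputable def ω3 : ℂ := (-1 + Complex.I * Real.sqrt 3) / 2

/-- A cube root Seidel matrix: self-adjoint, zero diagonal, off-diagonal
entries among the cube roots of unity. -/
def IsCubeRootSeidel {n : ℕ} (Q : Matrix (Fin n) (Fin n) ℂ) : Prop :=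
  Q.IsHermitian ∧ (∀ i, Q i i = 0) ∧
    ∀ i j, i ≠ j → Q i j = 1 ∨ Q i j = ω3 ∨ Q i j = ω3 ^ 2

/-- Standard form: every off-diagonal entry in the first row and first column
equals 1. -/
def IsStandardForm {n : ℕ} (Q : Matrix (Fin n) (Fin n) ℂ) : Prop :=
  ∀ i j : Fin n, i ≠ j → (i.val = 0 ∨ j.val = 0) → Q i j = 1

/-- Nontrivial: some off-diagonal entry is not equal to 1. -/
def IsNontrivial {n : ℕ} (Q : Matrix (Fin n) (Fin n) ℂ) : Prop :=
  ∃ i j : Fin n, i ≠ j ∧ Q i j ≠ 1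

/- ## auxiliary lemmas -/

lemma CRS.h3c : (Real.sqrt 3 : ℂ) ^ 2 = 3 := by
  norm_cast; rw [Real.sq_sqrt] <;> norm_num

lemma CRS.hω : ω3 ^ 2 + ω3 + 1 = 0 := by
  unfold ω3
  linear_combination (Complex.I ^ 2 * CRS.h3c + 3 * Complex.I_sq) / 4

lemma CRS.hconj : (starRingEnd ℂ) ω3 = ω3 ^ 2 := by
  unfold ω3
  simp only [map_div₀, map_add, map_mul, map_neg, map_one, map_ofNat, Complex.conj_I,
    Complex.conj_ofReal]
  linear_combination (- Complex.I ^ 2 * CRS.h3c - 3 * Complex.I_sq) / 4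

lemma CRS.him_ne : ω3.im ≠ 0 := by
  have : ω3.im = Real.sqrt 3 / 2 := by
    simp [ω3, Complex.div_im, Complex.add_im, Complex.mul_im]
  rw [this]; positivity

lemma CRS.basis_unique {a b c d : ℝ} (h : (a:ℂ) + b * ω3 = c + d * ω3) : a = c ∧ b = d := by
  have h2 := congrArg Complex.im h
  simp [Complex.add_im, Complex.mul_im] at h2
  have hbd : b = d := by
    rcases h2 with h2 | h2
    · exact h2
    · exact absurd h2 CRS.him_ne
  subst hbd
  refine ⟨?_, rfl⟩
  have h1 := congrArg Complex.re h
  simp [Complex.add_re, Complex.mul_re] at h1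
  linarith

lemma CRS.ω_ne_zero : ω3 ≠ 0 := by
  intro h; have := CRS.hω; rw [h] at this; norm_num at this
lemma CRS.ω_ne_one : ω3 ≠ 1 := by
  intro h; have := CRS.hω; rw [h] at this; norm_num at this
lemma CRS.ωsq_ne_one : ω3 ^ 2 ≠ 1 := by
  intro h
  have h2 : ω3 = -2 := by linear_combination CRS.hω - h
  rw [h2] at h; norm_num at h
lemma CRS.ωsq_ne_ω : ω3 ^ 2 ≠ ω3 := by
  intro h
  have h2 : 2 * ω3 = -1 := by linear_combination CRS.hω - h
  have h3 : ω3 = -1/2 := by linear_combination h2 / 2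
  rw [h3] at h; norm_num at h
lemma CRS.ω_pow_four : ω3 ^ 4 = ω3 := by
  linear_combination (ω3 ^ 2 - ω3) * CRS.hω
lemma CRS.ωsq_ne_zero : ω3 ^ 2 ≠ 0 := pow_ne_zero 2 CRS.ω_ne_zero

def CRS.Acoef : ZMod 3 → ℤ := fun t => if t = 0 then 1 else if t = 1 then 0 else -1
def CRS.Bcoef : ZMod 3 → ℤ := fun t => if t = 0 then 0 else if t = 1 then 1 else -1

noncomputable def CRS.ζ : ZMod 3 → ℂ := fun t => (CRS.Acoef t : ℂ) + (CRS.Bcoef t : ℂ) * ω3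

namespace CRS

lemma Bcoef_cast : ∀ t : ZMod 3, ((Bcoef t : ℤ) : ZMod 3) = t := by decide

lemma zmod3_cases : ∀ t : ZMod 3, t = 0 ∨ t = 1 ∨ t = 2 := by decide

lemma ζ_zero : ζ 0 = 1 := by norm_num [ζ, Acoef, Bcoef]
lemma ζ_one : ζ 1 = ω3 := by
  norm_num [ζ, Acoef, Bcoef, show (1:ZMod 3) ≠ 0 by decide]
lemma ζ_two : ζ 2 = ω3 ^ 2 := by
  have h : ζ 2 = -1 - ω3 := by
    norm_num [ζ, Acoef, Bcoef, show (2:ZMod 3) ≠ 0 by decide, show (2:ZMod 3) ≠ 1 by decide]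
    ring
  rw [h]; linear_combination -hω

lemma ζ_mul (s t : ZMod 3) : ζ s * ζ t = ζ (s + t) := by
  rcases zmod3_cases s with rfl | rfl | rfl <;> rcases zmod3_cases t with rfl | rfl | rfl <;>
    simp only [show (0+0:ZMod 3)=0 by decide, show (0+1:ZMod 3)=1 by decide,
      show (0+2:ZMod 3)=2 by decide, show (1+0:ZMod 3)=1 by decide,
      show (1+1:ZMod 3)=2 by decide, show (1+2:ZMod 3)=0 by decide,
      show (2+0:ZMod 3)=2 by decide, show (2+1:ZMod 3)=0 by decide,
      show (2+2:ZMod 3)=1 by decide, ζ_zero, ζ_one, ζ_two] <;>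
    first
      | linear_combination (0:ℂ) * hω
      | linear_combination (1 - ω3) * hω
      | linear_combination (ω3 - 1) * hω
      | linear_combination ω3 * hω
      | linear_combination -ω3 * hω
      | linear_combination (ω3^2 - ω3) * hω
      | linear_combination (ω3 - ω3^2) * hω
      | linear_combination hω
      | linear_combination -hω

lemma sum_zeta {n : ℕ} (s : Finset (Fin n)) (g : Fin n → ZMod 3) :
    ∑ k ∈ s, ζ (g k) =
      ((∑ k ∈ s, Acoef (g k) : ℤ) : ℂ) + ((∑ k ∈ s, Bcoef (g k) : ℤ) : ℂ) * ω3 := by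
  simp only [ζ]
  push_cast
  rw [Finset.sum_add_distrib, Finset.sum_mul]

lemma key {n : ℕ} (s : Finset (Fin n)) (g : Fin n → ZMod 3) (x y : ℝ)
    (h : ∑ k ∈ s, ζ (g k) = (x:ℂ) + (y:ℂ) * ω3) :
    x = ((∑ k ∈ s, Acoef (g k) : ℤ) : ℝ) ∧ y = ((∑ k ∈ s, Bcoef (g k) : ℤ) : ℝ) := by
  rw [sum_zeta] at h
  have h' : ((x:ℝ):ℂ) + ((y:ℝ):ℂ) * ω3 =
      (((∑ k ∈ s, Acoef (g k) : ℤ) : ℝ) : ℂ) + (((∑ k ∈ s, Bcoef (g k) : ℤ) : ℝ) : ℂ) * ω3 := by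
    push_cast
    push_cast at h
    linear_combination -h
  exact basis_unique h'

lemma sum_split {n : ℕ} {M : Type*} [AddCommMonoid M] {x y : Fin n} (hxy : x ≠ y)
    (f : Fin n → M) :
    ∑ k, f k = f x + f y + ∑ k ∈ (Finset.univ.erase x).erase y, f k := by
  have hy : y ∈ Finset.univ.erase x := Finset.mem_erase.2 ⟨hxy.symm, Finset.mem_univ y⟩
  rw [← Finset.sum_erase_add _ _ (Finset.mem_univ x),
      ← Finset.sum_erase_add _ _ hy]
  abel

lemma ζ_def (t : ZMod 3) : ζ t = (Acoef t : ℂ) + (Bcoef t : ℂ) * ω3 := rfl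

end CRS

theorem cubeRootSeidel_mu_integer_mod_three
    (n : ℕ) (Q : Matrix (Fin n) (Fin n) ℂ) (μ : ℝ)
    (hQ : IsCubeRootSeidel Q) (hsf : IsStandardForm Q) (hnt : IsNontrivial Q)
    (heq : Q ^ 2 = ((n : ℂ) - 1) • (1 : Matrix (Fin n) (Fin n) ℂ) + (μ : ℂ) • Q) :
    ∃ m : ℤ, μ = (m : ℝ) ∧ m % 3 = 1 := by
  classical
  obtain ⟨hherm, hdiag, hent⟩ := hQ
  obtain ⟨a, b, hab, hQab⟩ := hnt
  set z0 : Fin n := ⟨0, a.pos⟩ with hz0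
  have ha0 : a ≠ z0 := by
    intro h
    exact hQab (hsf a b hab (Or.inl (by rw [h])))
  have hb0 : b ≠ z0 := by
    intro h
    exact hQab (hsf a b hab (Or.inr (by rw [h])))
  set d : Fin n → Fin n → ZMod 3 :=
    fun i j => if Q i j = ω3 then 1 else if Q i j = ω3 ^ 2 then 2 else 0 with hdd
  -- basic facts about d
  have hQd : ∀ i j, i ≠ j → Q i j = CRS.ζ (d i j) := by
    intro i j hij
    rcases hent i j hij with h | h | h <;>
      simp [hdd, h, CRS.ζ_zero, CRS.ζ_one, CRS.ζ_two,
        Ne.symm CRS.ω_ne_one, Ne.symm CRS.ωsq_ne_one, CRS.ωsq_ne_ω]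
  have ddiag : ∀ i, d i i = 0 := by
    intro i
    simp [hdd, hdiag i, Ne.symm CRS.ω_ne_zero, Ne.symm CRS.ωsq_ne_zero]
  have dof1 : ∀ i j, Q i j = 1 → d i j = 0 := by
    intro i j h
    simp [hdd, h, Ne.symm CRS.ω_ne_one, Ne.symm CRS.ωsq_ne_one]
  have dz0 : ∀ i, i ≠ z0 → d i z0 = 0 := fun i hi => dof1 i z0 (hsf i z0 hi (Or.inr rfl))
  have hstar : ∀ i j, Q j i = star (Q i j) := by
    intro i j
    have h1 : Q.conjTranspose j i = Q j i := by rw [Matrix.IsHermitian] at hherm; rw [hherm]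
    rw [Matrix.conjTranspose_apply] at h1
    exact h1.symm
  have hskew : ∀ i j, d j i = - d i j := by
    intro i j
    by_cases hij : i = j
    · subst hij; simp [ddiag]
    · rcases hent i j hij with h | h | h
      · have h2 : Q j i = 1 := by rw [hstar i j, h]; simp
        rw [dof1 i j h, dof1 j i h2]; simp
      · have h2 : Q j i = ω3 ^ 2 := by
          rw [hstar i j, h, Complex.star_def, CRS.hconj]
        have e1 : d i j = 1 := by simp [hdd, h]
        have e2 : d j i = 2 := by
          simp [hdd, h2]
          exact fun hc => absurd hc CRS.ωsq_ne_ω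
        rw [e1, e2]; decide
      · have h2 : Q j i = ω3 := by
          rw [hstar i j, h, Complex.star_def, map_pow, CRS.hconj]
          rw [← pow_mul]
          exact CRS.ω_pow_four
        have e1 : d i j = 2 := by
          simp [hdd, h]
          exact fun hc => absurd hc CRS.ωsq_ne_ω
        have e2 : d j i = 1 := by simp [hdd, h2]
        rw [e1, e2]; decide
  -- entrywise equation
  have hentry : ∀ i j : Fin n, (∑ k, Q i k * Q k j)
      = ((n:ℂ)-1) * (if i = j then 1 else 0) + (μ:ℂ) * Q i j := by
    intro i j
    have h := congrFun (congrFun heq i) j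
    rw [pow_two, Matrix.mul_apply] at h
    simpa [Matrix.add_apply, Matrix.smul_apply, Matrix.one_apply, smul_eq_mul] using h
  -- E1 : row equations
  have E1 : ∀ x : Fin n, x ≠ z0 →
      μ = ((∑ k ∈ (Finset.univ.erase x).erase z0, CRS.Acoef (d x k) : ℤ) : ℝ) ∧
      (∑ k ∈ (Finset.univ.erase x).erase z0, d x k) = 0 := by
    intro x hx
    have h := hentry x z0
    rw [CRS.sum_split hx (fun k => Q x k * Q k z0)] at h
    rw [hdiag x, hdiag z0, if_neg hx] at h
    have hx1 : Q x z0 = 1 := hsf x z0 hx (Or.inr rfl)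
    rw [hx1] at h
    have hsum : ∑ k ∈ (Finset.univ.erase x).erase z0, Q x k * Q k z0
        = ∑ k ∈ (Finset.univ.erase x).erase z0, CRS.ζ (d x k) := by
      refine Finset.sum_congr rfl (fun k hk => ?_)
      have hk1 : k ≠ z0 := (Finset.mem_erase.1 hk).1
      have hk2 : k ≠ x := (Finset.mem_erase.1 (Finset.mem_erase.1 hk).2).1
      rw [hsf k z0 hk1 (Or.inr rfl), mul_one, hQd x k (Ne.symm hk2)]
    have h' : ∑ k ∈ (Finset.univ.erase x).erase z0, CRS.ζ (d x k)
        = ((μ:ℝ):ℂ) + ((0:ℝ):ℂ) * ω3 := by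
      rw [← hsum]
      push_cast
      linear_combination h
    obtain ⟨h1, h2⟩ := CRS.key _ _ _ _ h'
    refine ⟨h1, ?_⟩
    have h3 : (∑ k ∈ (Finset.univ.erase x).erase z0, CRS.Bcoef (d x k)) = (0:ℤ) := by
      exact_mod_cast h2.symm
    have h4 : ((∑ k ∈ (Finset.univ.erase x).erase z0, CRS.Bcoef (d x k) : ℤ) : ZMod 3)
        = ∑ k ∈ (Finset.univ.erase x).erase z0, d x k := by
      push_cast [CRS.Bcoef_cast]
      rfl
    rw [h3] at h4
    exact h4.symm
  obtain ⟨hμ, hA⟩ := E1 a ha0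
  obtain ⟨_, hB⟩ := E1 b hb0
  set m : ℤ := ∑ k ∈ (Finset.univ.erase a).erase z0, CRS.Acoef (d a k) with hm
  set e : ZMod 3 := d a b with he
  -- row sums over univ vanish
  have hRa : (∑ k, d a k) = 0 := by
    rw [CRS.sum_split ha0 (d a), ddiag a, dz0 a ha0, hA]
    simp
  have hRb : (∑ k, d b k) = 0 := by
    rw [CRS.sum_split hb0 (d b), ddiag b, dz0 b hb0, hB]
    simp
  have hCb : (∑ k, d k b) = 0 := by
    have : (∑ k, d k b) = ∑ k, -(d b k) := Finset.sum_congr rfl (fun k _ => hskew b k)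
    rw [this, Finset.sum_neg_distrib, hRb, neg_zero]
  -- sums over the doubly-erased set for E2
  have hSa : (∑ k ∈ (Finset.univ.erase a).erase b, d a k) = -e := by
    have := CRS.sum_split hab (d a)
    rw [hRa, ddiag a] at this
    linear_combination -this
  have hSb : (∑ k ∈ (Finset.univ.erase a).erase b, d k b) = -e := by
    have := CRS.sum_split hab (fun k => d k b)
    rw [hCb, ddiag b] at this
    linear_combination -this
  -- E2 : the (a,b) equation
  have h := hentry a b
  rw [CRS.sum_split hab (fun k => Q a k * Q k b)] at h
  rw [hdiag a, hdiag b, if_neg hab] at h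
  have hsum2 : ∑ k ∈ (Finset.univ.erase a).erase b, Q a k * Q k b
      = ∑ k ∈ (Finset.univ.erase a).erase b, CRS.ζ (d a k + d k b) := by
    refine Finset.sum_congr rfl (fun k hk => ?_)
    have hk1 : k ≠ b := (Finset.mem_erase.1 hk).1
    have hk2 : k ≠ a := (Finset.mem_erase.1 (Finset.mem_erase.1 hk).2).1
    rw [hQd a k (Ne.symm hk2), hQd k b hk1, CRS.ζ_mul]
  have h' : ∑ k ∈ (Finset.univ.erase a).erase b, CRS.ζ (d a k + d k b)
      = ((μ * (CRS.Acoef e : ℝ) : ℝ):ℂ) + ((μ * (CRS.Bcoef e : ℝ) : ℝ):ℂ) * ω3 := by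
    rw [← hsum2]
    have hQab2 : Q a b = CRS.ζ e := hQd a b hab
    have : CRS.ζ e = (CRS.Acoef e : ℂ) + (CRS.Bcoef e : ℂ) * ω3 := CRS.ζ_def e
    push_cast
    rw [hQab2, this] at h
    linear_combination h
  obtain ⟨_, h2⟩ := CRS.key _ _ _ _ h'
  -- convert to integers then ZMod 3
  rw [hμ] at h2
  have h3 : m * CRS.Bcoef e = ∑ k ∈ (Finset.univ.erase a).erase b, CRS.Bcoef (d a k + d k b) := by
    exact_mod_cast h2
  have h4 : (m : ZMod 3) * e = ∑ k ∈ (Finset.univ.erase a).erase b, (d a k + d k b) := by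
    have := congrArg (fun z : ℤ => (z : ZMod 3)) h3
    push_cast [CRS.Bcoef_cast] at this
    exact this
  rw [Finset.sum_add_distrib, hSa, hSb] at h4
  -- e ≠ 0
  have hene : e ≠ 0 := by
    rcases hent a b hab with hc | hc | hc
    · exact absurd hc hQab
    · have he1 : e = 1 := by simp [he, hdd, hc]
      rw [he1]; decide
    · have he2 : e = 2 := by
        simp [he, hdd, hc]
        exact fun hc2 => absurd hc2 CRS.ωsq_ne_ω
      rw [he2]; decide
  -- conclude (m : ZMod 3) = 1
  have hm1 : (m : ZMod 3) = 1 := by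
    have hfact : ((m : ZMod 3) - 1) * e = 0 := by
      calc ((m : ZMod 3) - 1) * e = (m : ZMod 3) * e - e := by ring
        _ = (-e + -e) - e := by rw [h4]
        _ = (3 : ZMod 3) * (-e) := by ring
        _ = 0 := by rw [show (3 : ZMod 3) = 0 by decide, zero_mul]
    rcases mul_eq_zero.1 hfact with hc | hc
    · linear_combination hc
    · exact absurd hc hene
  refine ⟨m, hμ, ?_⟩
  have : ((m - 1 : ℤ) : ZMod 3) = 0 := by
    push_cast
    rw [hm1]
    ring
  rw [ZMod.intCast_zmod_eq_zero_iff_dvd] at this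
  obtain ⟨c, hc⟩ := this
  omega
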